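/- Let Q ⊂ ℝ^d (d ≥ 3) be a cube of edge length ℓ, c ∈ 2Q a point, φ_Q smooth with supp φ_Q ⊂ 2Q and ‖∇^k φ_Q‖_∞ ≤ C_k/ℓ^k (k ≤ 2), and f smooth compactly supported with ω-seminorm M. Define the Taylor coefficients C_{α,Q} = C_d ((−1)^{|α|}/α!) ∫_{2Q} Δ(φ_Q(y)(y−c)^α) (f(y) − f(c)) dy. Then |C_{α,Q}| ≤ C (1/α!) M ω(ℓ) (2ℓ√d)^{d+|α|−2} with C independent of ℓ, α, M. -/

import Mathlib

open Set Metric MeasureTheory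

/-- The Laplacian of `g : ℝ^d → ℝ`. -/
noncomputable def lap {d : ℕ} (g : EuclideanSpace ℝ (Fin d) → ℝ)
    (x : EuclideanSpace ℝ (Fin d)) : ℝ :=
  ∑ i : Fin d, fderiv ℝ (fun y => fderiv ℝ g y (EuclideanSpace.single i 1)) x
    (EuclideanSpace.single i 1)

/-- The doubled cube `2Q`. -/
def doubleCube {d : ℕ} (a : Fin d → ℝ) (ℓ : ℝ) : Set (EuclideanSpace ℝ (Fin d)) :=
  {x | ∀ i, x i ∈ Icc (a i - ℓ / 2) (a i + ℓ + ℓ / 2)}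

/-- The normalizing constant of the fundamental solution of `Δ` in `ℝ^d`. -/
noncomputable def fundConst (d : ℕ) : ℝ :=
  (((d : ℝ) - 2) * (d : ℝ) *
    (volume (ball (0 : EuclideanSpace ℝ (Fin d)) 1)).toReal)⁻¹

section Auxiliary

variable {d : ℕ}

local notation "E" => EuclideanSpace ℝ (Fin d)

/-- The monomial `x ↦ (x - c)^β`. -/
noncomputable def monoF (c : E) (β : Fin d → ℕ) : E → ℝ := fun x => ∏ j, (x j - c j) ^ β j

lemma monoF_hasFDerivAt (c : E) (β : Fin d → ℕ) (x : E) :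
    HasFDerivAt (monoF c β)
      (∑ j, (∏ k ∈ Finset.univ.erase j, (x k - c k) ^ β k) •
        (((β j : ℝ) * (x j - c j) ^ (β j - 1)) • (EuclideanSpace.proj j : E →L[ℝ] ℝ))) x := by
  exact HasFDerivAt.finset_prod fun j _ =>
    (hasDerivAt_pow (β j) (x j - c j)).comp_hasFDerivAt x
      (((EuclideanSpace.proj j : E →L[ℝ] ℝ).hasFDerivAt (x := x)).sub_const (c j))

lemma monoF_update (c : E) (β : Fin d → ℕ) (x : E) (i : Fin d) (m : ℕ) :
    monoF c (Function.update β i m) x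
      = (x i - c i) ^ m * ∏ k ∈ Finset.univ.erase i, (x k - c k) ^ β k := by
  unfold monoF
  rw [← Finset.mul_prod_erase Finset.univ _ (Finset.mem_univ i), Function.update_self]
  congr 1
  exact Finset.prod_congr rfl fun k hk => by
    rw [Function.update_of_ne (Finset.ne_of_mem_erase hk)]

lemma monoF_differentiableAt (c : E) (β : Fin d → ℕ) (x : E) :
    DifferentiableAt ℝ (monoF c β) x := (monoF_hasFDerivAt c β x).differentiableAt

lemma monoF_fderiv_single (c : E) (β : Fin d → ℕ) (x : E) (i : Fin d) :
    fderiv ℝ (monoF c β) x (EuclideanSpace.single i 1)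
      = (β i : ℝ) * monoF c (Function.update β i (β i - 1)) x := by
  rw [(monoF_hasFDerivAt c β x).fderiv, ContinuousLinearMap.sum_apply,
    Finset.sum_eq_single i]
  · rw [monoF_update]
    simp only [ContinuousLinearMap.smul_apply, smul_eq_mul]
    have : (EuclideanSpace.proj i : E →L[ℝ] ℝ) (EuclideanSpace.single i 1) = 1 := by
      simp [EuclideanSpace.single_apply]
    rw [this]; ring
  · intro j _ hji
    have : (EuclideanSpace.proj j : E →L[ℝ] ℝ) (EuclideanSpace.single i 1) = 0 := by
      simp [EuclideanSpace.single_apply, fun h : j = i => hji h]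
    simp [this]
  · intro h; exact absurd (Finset.mem_univ i) h

lemma monoF_continuous (c : E) (β : Fin d → ℕ) : Continuous (monoF c β) := by
  unfold monoF
  exact continuous_finset_prod _ fun j _ =>
    (((EuclideanSpace.proj j : E →L[ℝ] ℝ).continuous).sub continuous_const).pow (β j)

lemma monoF_abs_le (c : E) (β : Fin d → ℕ) (x : E) (L : ℝ)
    (h : ∀ j, |x j - c j| ≤ L) : |monoF c β x| ≤ L ^ (∑ j, β j) := by
  unfold monoF
  rw [Finset.abs_prod, ← Finset.prod_pow_eq_pow_sum]
  exact Finset.prod_le_prod (fun j _ => abs_nonneg _)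
    (fun j _ => by rw [abs_pow]; exact pow_le_pow_left₀ (abs_nonneg _) (h j) _)

lemma apply_single_abs_le_opNorm1 (φ : E → ℝ) (x : E) (i : Fin d) :
    |fderiv ℝ φ x (EuclideanSpace.single i 1)| ≤ ‖iteratedFDeriv ℝ 1 φ x‖ := by
  have h := iteratedFDeriv_one_apply (𝕜 := ℝ) (f := φ) (x := x) ![EuclideanSpace.single i 1]
  have h2 : fderiv ℝ φ x (EuclideanSpace.single i 1)
      = iteratedFDeriv ℝ 1 φ x ![EuclideanSpace.single i 1] := by
    rw [h]; rfl
  rw [h2, ← Real.norm_eq_abs]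
  calc ‖iteratedFDeriv ℝ 1 φ x ![EuclideanSpace.single i 1]‖
      ≤ ‖iteratedFDeriv ℝ 1 φ x‖ * ∏ j : Fin 1, ‖(![EuclideanSpace.single i 1] : Fin 1 → E) j‖ :=
        (iteratedFDeriv ℝ 1 φ x).le_opNorm _
    _ = ‖iteratedFDeriv ℝ 1 φ x‖ := by
        simp [EuclideanSpace.norm_single]

lemma second_deriv_abs_le (φ : E → ℝ) (hφ : ContDiff ℝ (⊤ : ℕ∞) φ) (x : E) (i : Fin d) :
    |fderiv ℝ (fun y => fderiv ℝ φ y (EuclideanSpace.single i 1)) x (EuclideanSpace.single i 1)|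
      ≤ ‖iteratedFDeriv ℝ 2 φ x‖ := by
  have hdf : DifferentiableAt ℝ (fderiv ℝ φ) x :=
    (((hφ.fderiv_right (m := (⊤ : ℕ∞)) (by simp))).differentiable (by simp)).differentiableAt
  have key : fderiv ℝ (fun y => fderiv ℝ φ y (EuclideanSpace.single i 1)) x
      (EuclideanSpace.single i 1)
      = iteratedFDeriv ℝ 2 φ x ![EuclideanSpace.single i 1, EuclideanSpace.single i 1] := by
    rw [iteratedFDeriv_two_apply]
    rw [fderiv_clm_apply hdf (differentiableAt_const _)]
    simp
  rw [key, ← Real.norm_eq_abs]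
  calc ‖iteratedFDeriv ℝ 2 φ x ![EuclideanSpace.single i 1, EuclideanSpace.single i 1]‖
      ≤ ‖iteratedFDeriv ℝ 2 φ x‖ * ∏ j : Fin 2,
          ‖(![EuclideanSpace.single i 1, EuclideanSpace.single i 1] : Fin 2 → E) j‖ :=
        (iteratedFDeriv ℝ 2 φ x).le_opNorm _
    _ = ‖iteratedFDeriv ℝ 2 φ x‖ := by
        simp [Fin.prod_univ_two, EuclideanSpace.norm_single]

lemma lap_mul_mono (φ : E → ℝ) (hφ : ContDiff ℝ (⊤ : ℕ∞) φ) (c : E) (α : Fin d → ℕ) (x : E) :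
    lap (fun z => φ z * monoF c α z) x
      = ∑ i : Fin d,
          (fderiv ℝ (fun y => fderiv ℝ φ y (EuclideanSpace.single i 1)) x
              (EuclideanSpace.single i 1) * monoF c α x
            + 2 * fderiv ℝ φ x (EuclideanSpace.single i 1) *
                ((α i : ℝ) * monoF c (Function.update α i (α i - 1)) x)
            + φ x * ((α i : ℝ) * ((α i - 1 : ℕ) : ℝ) *
                monoF c (Function.update α i (α i - 2)) x)) := by
  unfold lap
  refine Finset.sum_congr rfl fun i _ => ?_
  set e := EuclideanSpace.single i (1:ℝ) with he
  have hφd : Differentiable ℝ φ := hφ.differentiable (by simp)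
  have hD1φ : ContDiff ℝ (⊤ : ℕ∞) (fun y => fderiv ℝ φ y e) :=
    (hφ.fderiv_right (m := (⊤ : ℕ∞)) (by simp)).clm_apply contDiff_const
  have step1 : (fun y => fderiv ℝ (fun z => φ z * monoF c α z) y e)
      = (fun y => φ y * ((α i : ℝ) * monoF c (Function.update α i (α i - 1)) y)
          + monoF c α y * fderiv ℝ φ y e) := by
    funext y
    rw [fderiv_fun_mul (hφd y) (monoF_differentiableAt c α y)]
    rw [ContinuousLinearMap.add_apply, ContinuousLinearMap.smul_apply,
      ContinuousLinearMap.smul_apply, smul_eq_mul, smul_eq_mul, monoF_fderiv_single]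
  rw [step1]
  have hg : DifferentiableAt ℝ (fun y => (α i : ℝ) * monoF c (Function.update α i (α i - 1)) y) x :=
    (monoF_differentiableAt c _ x).const_mul _
  have h1 : DifferentiableAt ℝ (fun y => φ y * ((α i : ℝ) * monoF c (Function.update α i (α i - 1)) y)) x :=
    (hφd x).mul hg
  have h2 : DifferentiableAt ℝ (fun y => monoF c α y * fderiv ℝ φ y e) x :=
    (monoF_differentiableAt c α x).mul (hD1φ.differentiable (by simp) x)
  rw [fderiv_fun_add h1 h2, ContinuousLinearMap.add_apply]
  rw [fderiv_fun_mul (hφd x) hg, ContinuousLinearMap.add_apply, ContinuousLinearMap.smul_apply,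
    ContinuousLinearMap.smul_apply, smul_eq_mul, smul_eq_mul]
  rw [fderiv_fun_mul (monoF_differentiableAt c α x) (hD1φ.differentiable (by simp) x),
    ContinuousLinearMap.add_apply, ContinuousLinearMap.smul_apply,
    ContinuousLinearMap.smul_apply, smul_eq_mul, smul_eq_mul]
  rw [fderiv_const_mul (monoF_differentiableAt c _ x), ContinuousLinearMap.smul_apply, smul_eq_mul]
  rw [monoF_fderiv_single, monoF_fderiv_single]
  rw [Function.update_idem, Function.update_self]
  have : α i - 1 - 1 = α i - 2 := by omega
  rw [this]
  ring

lemma sum_update_sub (α : Fin d → ℕ) (i : Fin d) (m : ℕ) (h : m ≤ α i) :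
    ∑ j, Function.update α i (α i - m) j = (∑ j, α j) - m := by
  rw [Finset.sum_update_of_mem (Finset.mem_univ i)]
  have h2 : α i + ∑ j ∈ Finset.univ \ {i}, α j = ∑ j, α j := by
    rw [← Finset.erase_eq]
    exact Finset.add_sum_erase _ _ (Finset.mem_univ i)
  omega

lemma lap_mul_mono_bound (φ : E → ℝ) (hφ : ContDiff ℝ (⊤ : ℕ∞) φ)
    (C₀ C₁ C₂ ℓ : ℝ) (hℓ : 0 < ℓ)
    (hC0 : ∀ x, ‖iteratedFDeriv ℝ 0 φ x‖ ≤ C₀)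
    (hC1 : ∀ x, ‖iteratedFDeriv ℝ 1 φ x‖ ≤ C₁ / ℓ)
    (hC2 : ∀ x, ‖iteratedFDeriv ℝ 2 φ x‖ ≤ C₂ / ℓ ^ 2)
    (c : E) (α : Fin d → ℕ) (x : E) (hx : ∀ j, |x j - c j| ≤ 2 * ℓ) :
    |lap (fun z => φ z * monoF c α z) x|
      ≤ (d : ℝ) * ((C₂ + C₁ * (∑ j, α j) + C₀ * (∑ j, α j) ^ 2)
          * (2 * ℓ) ^ (∑ j, α j) / ℓ ^ 2) := by
  have hC0nn : 0 ≤ C₀ := le_trans (norm_nonneg _) (hC0 x)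
  have hC1nn : 0 ≤ C₁ / ℓ := le_trans (norm_nonneg _) (hC1 x)
  have hC2nn : 0 ≤ C₂ / ℓ ^ 2 := le_trans (norm_nonneg _) (hC2 x)
  have hC1nn' : 0 ≤ C₁ := by
    have := (div_nonneg_iff.mp hC1nn); rcases this with ⟨h, _⟩ | ⟨_, h⟩
    · exact h
    · nlinarith
  have hC2nn' : 0 ≤ C₂ := by
    have := (div_nonneg_iff.mp hC2nn); rcases this with ⟨h, _⟩ | ⟨_, h⟩
    · exact h
    · nlinarith
  have hC0' : ∀ y, |φ y| ≤ C₀ := fun y => by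
    rw [← Real.norm_eq_abs, ← norm_iteratedFDeriv_zero (𝕜 := ℝ)]; exact hC0 y
  have hLnn : (0:ℝ) ≤ 2 * ℓ := by linarith
  set s := ∑ j, α j with hs
  have hαle : ∀ i, α i ≤ s := fun i =>
    Finset.single_le_sum (fun j _ => Nat.zero_le (α j)) (Finset.mem_univ i)
  have key : ∀ i : Fin d,
      |fderiv ℝ (fun y => fderiv ℝ φ y (EuclideanSpace.single i 1)) x
          (EuclideanSpace.single i 1) * monoF c α x
        + 2 * fderiv ℝ φ x (EuclideanSpace.single i 1) *
            ((α i : ℝ) * monoF c (Function.update α i (α i - 1)) x)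
        + φ x * ((α i : ℝ) * ((α i - 1 : ℕ) : ℝ) *
            monoF c (Function.update α i (α i - 2)) x)|
      ≤ (C₂ + C₁ * s + C₀ * s ^ 2) * (2 * ℓ) ^ s / ℓ ^ 2 := by
    intro i
    have t1 : |fderiv ℝ (fun y => fderiv ℝ φ y (EuclideanSpace.single i 1)) x
        (EuclideanSpace.single i 1) * monoF c α x| ≤ (C₂ / ℓ ^ 2) * (2 * ℓ) ^ s := by
      rw [abs_mul]
      exact mul_le_mul (le_trans (second_deriv_abs_le φ hφ x i) (hC2 x))
        (monoF_abs_le c α x _ hx) (abs_nonneg _) hC2nn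
    have t2 : |2 * fderiv ℝ φ x (EuclideanSpace.single i 1) *
        ((α i : ℝ) * monoF c (Function.update α i (α i - 1)) x)|
        ≤ C₁ * s * (2 * ℓ) ^ s / ℓ ^ 2 := by
      rcases Nat.eq_zero_or_pos (α i) with h0 | hpos
      · rw [h0]
        simp only [Nat.cast_zero, zero_mul, mul_zero, abs_zero]
        positivity
      · have hs1 : 1 ≤ s := le_trans hpos (hαle i)
        have hm : |monoF c (Function.update α i (α i - 1)) x| ≤ (2 * ℓ) ^ (s - 1) := by
          have := monoF_abs_le c (Function.update α i (α i - 1)) x _ hx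
          rwa [sum_update_sub α i 1 hpos] at this
        have hd1 : |fderiv ℝ φ x (EuclideanSpace.single i 1)| ≤ C₁ / ℓ :=
          le_trans (apply_single_abs_le_opNorm1 φ x i) (hC1 x)
        rw [abs_mul, abs_mul]
        have habs2 : |(2:ℝ)| = 2 := by norm_num
        rw [habs2, abs_mul, Nat.abs_cast]
        have hb : 2 * |fderiv ℝ φ x (EuclideanSpace.single i 1)| *
            ((α i : ℝ) * |monoF c (Function.update α i (α i - 1)) x|)
            ≤ 2 * (C₁ / ℓ) * ((s : ℝ) * (2 * ℓ) ^ (s - 1)) := by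
          have h1 : (α i : ℝ) ≤ (s : ℝ) := Nat.cast_le.mpr (hαle i)
          have := mul_le_mul hd1 (mul_le_mul h1 hm (abs_nonneg _) (Nat.cast_nonneg s))
            (mul_nonneg (Nat.cast_nonneg _) (abs_nonneg _)) hC1nn
          nlinarith [abs_nonneg (fderiv ℝ φ x (EuclideanSpace.single i 1)),
            abs_nonneg (monoF c (Function.update α i (α i - 1)) x)]
        refine le_trans hb ?_
        have hpow : (2 * ℓ) ^ s = (2 * ℓ) ^ (s - 1) * (2 * ℓ) := by
          rw [← pow_succ]; congr 1; omega
        rw [hpow]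
        refine le_of_eq ?_
        field_simp
    have t3 : |φ x * ((α i : ℝ) * ((α i - 1 : ℕ) : ℝ) *
        monoF c (Function.update α i (α i - 2)) x)|
        ≤ C₀ * s ^ 2 * (2 * ℓ) ^ s / ℓ ^ 2 := by
      rcases Nat.lt_or_ge (α i) 2 with h0 | hpos
      · have hc0 : (α i : ℝ) * ((α i - 1 : ℕ) : ℝ) = 0 := by
          interval_cases h : α i <;> norm_num
        have hz : φ x * ((α i : ℝ) * ((α i - 1 : ℕ) : ℝ) *
            monoF c (Function.update α i (α i - 2)) x) = 0 := by
          rw [hc0, zero_mul, mul_zero]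
        rw [hz, abs_zero]
        positivity
      · have hs2 : 2 ≤ s := le_trans hpos (hαle i)
        have hm : |monoF c (Function.update α i (α i - 2)) x| ≤ (2 * ℓ) ^ (s - 2) := by
          have := monoF_abs_le c (Function.update α i (α i - 2)) x _ hx
          rwa [sum_update_sub α i 2 hpos] at this
        have hcoef : (α i : ℝ) * ((α i - 1 : ℕ) : ℝ) ≤ (s : ℝ) ^ 2 := by
          have h1 : (α i) * (α i - 1) ≤ s ^ 2 := by
            have := hαle i; nlinarith [Nat.sub_le (α i) 1]
          calc (α i : ℝ) * ((α i - 1 : ℕ) : ℝ) = ((α i * (α i - 1) : ℕ) : ℝ) := by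
                push_cast; ring
            _ ≤ ((s ^ 2 : ℕ) : ℝ) := Nat.cast_le.mpr h1
            _ = (s : ℝ) ^ 2 := by push_cast; ring
        rw [abs_mul, abs_mul, abs_mul, Nat.abs_cast, Nat.abs_cast]
        have hb : |φ x| * ((α i : ℝ) * ((α i - 1 : ℕ) : ℝ) *
            |monoF c (Function.update α i (α i - 2)) x|)
            ≤ C₀ * ((s:ℝ) ^ 2 * (2 * ℓ) ^ (s - 2)) := by
          have := mul_le_mul (hC0' x) (mul_le_mul hcoef hm (abs_nonneg _) (by positivity))
            (mul_nonneg (mul_nonneg (Nat.cast_nonneg _) (Nat.cast_nonneg _)) (abs_nonneg _))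
            hC0nn
          nlinarith [abs_nonneg (φ x)]
        refine le_trans (le_of_eq (by ring)) (le_trans hb ?_)
        have hpow : (2 * ℓ) ^ s = (2 * ℓ) ^ (s - 2) * (2 * ℓ) ^ 2 := by
          rw [← pow_add]; congr 1; omega
        rw [hpow]
        have h4 : C₀ * ((s:ℝ)^2 * (2*ℓ)^(s-2)) ≤ C₀ * (s:ℝ)^2 * ((2*ℓ)^(s-2) * (2*ℓ)^2) / ℓ^2 := by
          have hexp : C₀ * (s:ℝ)^2 * ((2*ℓ)^(s-2) * (2*ℓ)^2) / ℓ^2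
              = 4 * (C₀ * ((s:ℝ)^2 * (2*ℓ)^(s-2))) := by
            field_simp; ring
          rw [hexp]
          nlinarith [pow_nonneg hLnn (s-2), sq_nonneg (s:ℝ), mul_nonneg hC0nn
            (mul_nonneg (sq_nonneg (s:ℝ)) (pow_nonneg hLnn (s-2)))]
        exact h4
    calc _ ≤ |fderiv ℝ (fun y => fderiv ℝ φ y (EuclideanSpace.single i 1)) x
          (EuclideanSpace.single i 1) * monoF c α x|
        + |2 * fderiv ℝ φ x (EuclideanSpace.single i 1) *
            ((α i : ℝ) * monoF c (Function.update α i (α i - 1)) x)|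
        + |φ x * ((α i : ℝ) * ((α i - 1 : ℕ) : ℝ) *
            monoF c (Function.update α i (α i - 2)) x)| := abs_add_three _ _ _
      _ ≤ (C₂ / ℓ ^ 2) * (2 * ℓ) ^ s + C₁ * s * (2 * ℓ) ^ s / ℓ ^ 2
            + C₀ * s ^ 2 * (2 * ℓ) ^ s / ℓ ^ 2 := by
          exact add_le_add (add_le_add t1 t2) t3
      _ = (C₂ + C₁ * s + C₀ * s ^ 2) * (2 * ℓ) ^ s / ℓ ^ 2 := by ring
  rw [lap_mul_mono φ hφ c α x]
  calc |∑ i : Fin d, _| ≤ ∑ i : Fin d, _ := Finset.abs_sum_le_sum_abs _ _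
    _ ≤ ∑ _i : Fin d, (C₂ + C₁ * s + C₀ * s ^ 2) * (2 * ℓ) ^ s / ℓ ^ 2 :=
        Finset.sum_le_sum fun i _ => key i
    _ = (d : ℝ) * ((C₂ + C₁ * s + C₀ * s ^ 2) * (2 * ℓ) ^ s / ℓ ^ 2) := by
        rw [Finset.sum_const, Finset.card_univ, Fintype.card_fin, nsmul_eq_mul]

lemma lap_mul_mono_continuous (φ : E → ℝ) (hφ : ContDiff ℝ (⊤ : ℕ∞) φ) (c : E) (α : Fin d → ℕ) :
    Continuous (fun x => lap (fun z => φ z * monoF c α z) x) := by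
  have hrw : (fun x => lap (fun z => φ z * monoF c α z) x)
      = fun x => ∑ i : Fin d,
          (fderiv ℝ (fun y => fderiv ℝ φ y (EuclideanSpace.single i 1)) x
              (EuclideanSpace.single i 1) * monoF c α x
            + 2 * fderiv ℝ φ x (EuclideanSpace.single i 1) *
                ((α i : ℝ) * monoF c (Function.update α i (α i - 1)) x)
            + φ x * ((α i : ℝ) * ((α i - 1 : ℕ) : ℝ) *
                monoF c (Function.update α i (α i - 2)) x)) :=
    funext (lap_mul_mono φ hφ c α)
  rw [hrw]
  apply continuous_finset_sum
  intro i _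
  have hD1 : ContDiff ℝ (⊤ : ℕ∞) (fun y => fderiv ℝ φ y (EuclideanSpace.single i (1:ℝ))) :=
    (hφ.fderiv_right (m := (⊤ : ℕ∞)) (by simp)).clm_apply contDiff_const
  have hD2 : Continuous (fun x => fderiv ℝ
      (fun y => fderiv ℝ φ y (EuclideanSpace.single i (1:ℝ))) x (EuclideanSpace.single i 1)) :=
    (((hD1.fderiv_right (m := (⊤ : ℕ∞)) (by simp)).clm_apply contDiff_const)).continuous
  exact ((hD2.mul (monoF_continuous c α)).add
      (((continuous_const.mul hD1.continuous)).mul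
        (continuous_const.mul (monoF_continuous c _)))).add
    (hφ.continuous.mul (continuous_const.mul (monoF_continuous c _)))

lemma volume_doubleCube (a : Fin d → ℝ) (ℓ : ℝ) (hℓ : 0 < ℓ) :
    volume (doubleCube a ℓ) = ENNReal.ofReal ((2 * ℓ) ^ d) := by
  have hpre : doubleCube a ℓ = (MeasurableEquiv.toLp 2 (Fin d → ℝ)).symm ⁻¹'
      (Set.univ.pi fun i => Icc (a i - ℓ / 2) (a i + ℓ + ℓ / 2)) := by
    ext x
    simp only [doubleCube, mem_setOf_eq, Set.mem_preimage, Set.mem_pi, Set.mem_univ,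
      true_implies]
    exact Iff.rfl
  rw [hpre, MeasurePreserving.measure_preimage
    (EuclideanSpace.volume_preserving_symm_measurableEquiv_toLp _)
    (MeasurableSet.univ_pi fun i => measurableSet_Icc).nullMeasurableSet]
  rw [volume_pi_pi]
  have : ∀ i : Fin d, volume (Icc (a i - ℓ / 2) (a i + ℓ + ℓ / 2)) = ENNReal.ofReal (2 * ℓ) := by
    intro i; rw [Real.volume_Icc]; congr 1; ring
  rw [Finset.prod_congr rfl fun i _ => this i, Finset.prod_const, Finset.card_univ,
    Fintype.card_fin, ← ENNReal.ofReal_pow (by linarith)]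

lemma doubleCube_coord_bound {a : Fin d → ℝ} {ℓ : ℝ} {y c : E}
    (hy : y ∈ doubleCube a ℓ) (hc : c ∈ doubleCube a ℓ) (j : Fin d) :
    |y j - c j| ≤ 2 * ℓ := by
  have h1 := hy j; have h2 := hc j
  simp only [Set.mem_Icc] at h1 h2
  rw [abs_le]; constructor <;> linarith [h1.1, h1.2, h2.1, h2.2]

lemma doubleCube_dist_bound {a : Fin d → ℝ} {ℓ : ℝ} (hℓ : 0 < ℓ) {y c : E}
    (hy : y ∈ doubleCube a ℓ) (hc : c ∈ doubleCube a ℓ) :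
    dist y c ≤ 2 * ℓ * Real.sqrt d := by
  rw [EuclideanSpace.dist_eq]
  have hb : ∑ i, dist (y i) (c i) ^ 2 ≤ (d : ℝ) * (2 * ℓ) ^ 2 := by
    calc ∑ i, dist (y i) (c i) ^ 2 ≤ ∑ _i : Fin d, (2 * ℓ) ^ 2 := by
          refine Finset.sum_le_sum fun i _ => ?_
          have := doubleCube_coord_bound hy hc i
          rw [Real.dist_eq]
          nlinarith [abs_nonneg (y i - c i)]
      _ = (d : ℝ) * (2 * ℓ) ^ 2 := by
          rw [Finset.sum_const, Finset.card_univ, Fintype.card_fin, nsmul_eq_mul]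
  calc Real.sqrt (∑ i, dist (y i) (c i) ^ 2) ≤ Real.sqrt ((d : ℝ) * (2 * ℓ) ^ 2) :=
        Real.sqrt_le_sqrt hb
    _ = 2 * ℓ * Real.sqrt d := by
        rw [Real.sqrt_mul (Nat.cast_nonneg d), Real.sqrt_sq (by linarith)]
        ring

lemma growth_bound : ∀ s : ℕ, ((s : ℝ) + 1) ^ 2 ≤ 16 * Real.sqrt 3 ^ s := by
  have h3 : (1.7 : ℝ) ≤ Real.sqrt 3 := by
    nlinarith [Real.sq_sqrt (by norm_num : (0:ℝ) ≤ 3), Real.sqrt_nonneg 3]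
  intro s
  induction s with
  | zero => norm_num
  | succ n ih =>
    rcases Nat.lt_or_ge n 3 with h0 | h0
    · interval_cases n <;> push_cast <;> nlinarith [h3]
    · have hn : (3 : ℝ) ≤ (n : ℝ) := by exact_mod_cast h0
      have hp : (0:ℝ) ≤ Real.sqrt 3 ^ n := pow_nonneg (Real.sqrt_nonneg 3) n
      have key1 : Real.sqrt 3 * ((n:ℝ) + 1) ^ 2 ≤ Real.sqrt 3 * (16 * Real.sqrt 3 ^ n) :=
        mul_le_mul_of_nonneg_left ih (Real.sqrt_nonneg 3)
      have key2 : (1.7:ℝ) * ((n:ℝ)+1)^2 ≤ Real.sqrt 3 * ((n:ℝ)+1)^2 :=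
        mul_le_mul_of_nonneg_right h3 (sq_nonneg _)
      have key3 : ((n:ℝ) + 1 + 1) ^ 2 ≤ (1.7:ℝ) * ((n:ℝ)+1)^2 := by nlinarith [hn]
      have key4 : (16:ℝ) * Real.sqrt 3 ^ (n+1) = Real.sqrt 3 * (16 * Real.sqrt 3 ^ n) := by
        rw [pow_succ]; ring
      push_cast
      linarith [key1, key2, key3, key4.ge]

end Auxiliary

set_option maxHeartbeats 1000000 in
/-- Estimate on the Taylor coefficients
`C_{α,Q} = C_d ((−1)^{|α|}/α!) ∫_{2Q} Δ(φ_Q(y)(y−c)^α)(f(y) − f(c)) dy`: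
one has `|C_{α,Q}| ≤ C (1/α!) M ω(ℓ) (2ℓ√d)^{d+|α|−2}` with `C` independent
of `ℓ`, `α` and `M`. -/
theorem taylor_coefficient_bound (d : ℕ) (hd : 3 ≤ d) (C₀ C₁ C₂ : ℝ) :
    ∃ C : ℝ, 0 < C ∧
      ∀ (a : Fin d → ℝ) (ℓ : ℝ), 0 < ℓ →
      ∀ c ∈ doubleCube a ℓ,
      ∀ (φQ : EuclideanSpace ℝ (Fin d) → ℝ), ContDiff ℝ (⊤ : ℕ∞) φQ →
        tsupport φQ ⊆ doubleCube a ℓ →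
        (∀ x, ‖iteratedFDeriv ℝ 0 φQ x‖ ≤ C₀) →
        (∀ x, ‖iteratedFDeriv ℝ 1 φQ x‖ ≤ C₁ / ℓ) →
        (∀ x, ‖iteratedFDeriv ℝ 2 φQ x‖ ≤ C₂ / ℓ ^ 2) →
      ∀ (f : EuclideanSpace ℝ (Fin d) → ℝ), ContDiff ℝ (⊤ : ℕ∞) f →
        HasCompactSupport f →
      ∀ (ω : ℝ → ℝ), ContinuousOn ω (Ici 0) → MonotoneOn ω (Ici 0) →
        ConcaveOn ℝ (Ici 0) ω → ω 0 = 0 →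
      ∀ M : ℝ, 0 ≤ M → (∀ x y, |f x - f y| ≤ M * ω (dist x y)) →
      ∀ α : Fin d → ℕ,
        |fundConst d * ((-1 : ℝ) ^ (∑ i, α i) / ∏ i, (Nat.factorial (α i) : ℝ)) *
            ∫ y in doubleCube a ℓ,
              lap (fun z => φQ z * ∏ i, (z i - c i) ^ (α i)) y * (f y - f c)| ≤
          C * (1 / ∏ i, (Nat.factorial (α i) : ℝ)) * M * ω ℓ *
            (2 * ℓ * Real.sqrt d) ^ (d + (∑ i, α i) - 2) := by
  have hd0 : 0 < d := by omega
  have hSd0 : (0:ℝ) < Real.sqrt d := Real.sqrt_pos.mpr (by exact_mod_cast hd0)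
  have hSd1 : (1:ℝ) ≤ Real.sqrt d := by
    rw [show (1:ℝ) = Real.sqrt 1 by simp]
    exact Real.sqrt_le_sqrt (by exact_mod_cast hd0)
  have hSd3 : Real.sqrt 3 ≤ Real.sqrt d := Real.sqrt_le_sqrt (by exact_mod_cast hd)
  set Sd := Real.sqrt d with hSdd
  set G := |fundConst d| with hG
  set Sabs := |C₀| + |C₁| + |C₂| + 1 with hSabs
  have hSabs0 : 0 < Sabs := by positivity
  refine ⟨128 * Sd * d * (G + 1) * Sabs, by positivity, ?_⟩
  intro a ℓ hℓ c hc φQ hφ hsupp hC0 hC1 hC2 f hf hfc ω hωc hωm hωconc hω0 M hM hMω α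
  set s := ∑ i, α i with hs
  set Fac := ∏ i, (Nat.factorial (α i) : ℝ) with hFac
  have hFacpos : 0 < Fac := Finset.prod_pos fun i _ => by exact_mod_cast (α i).factorial_pos
  have hfun : (fun z : EuclideanSpace ℝ (Fin d) => φQ z * ∏ i, (z i - c i) ^ (α i))
      = fun z => φQ z * monoF c α z := rfl
  rw [hfun]
  set I := ∫ y in doubleCube a ℓ, lap (fun z => φQ z * monoF c α z) y * (f y - f c) with hI
  have habs : |fundConst d * ((-1:ℝ) ^ s / Fac) * I| = G * (1 / Fac) * |I| := by
    rw [abs_mul, abs_mul, abs_div, abs_pow, abs_neg, abs_one, one_pow, abs_of_pos hFacpos]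
  rw [habs]
  -- nonnegativity facts
  have hC0nn : 0 ≤ C₀ := le_trans (norm_nonneg _) (hC0 c)
  have hC1nn : 0 ≤ C₁ := by
    have h := le_trans (norm_nonneg _) (hC1 c)
    rcases div_nonneg_iff.mp h with ⟨h', _⟩ | ⟨_, h'⟩
    · exact h'
    · nlinarith
  have hC2nn : 0 ≤ C₂ := by
    have h := le_trans (norm_nonneg _) (hC2 c)
    rcases div_nonneg_iff.mp h with ⟨h', _⟩ | ⟨_, h'⟩
    · exact h'
    · nlinarith [sq_nonneg ℓ, pow_pos hℓ 2]
  have hωℓ : 0 ≤ ω ℓ := by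
    have := hωm (mem_Ici.mpr le_rfl) (mem_Ici.mpr hℓ.le) hℓ.le
    rw [hω0] at this; exact this
  -- modulus of continuity estimate
  have hωK : ω (2 * ℓ * Sd) ≤ 2 * Sd * ω ℓ := by
    have hK1 : (1:ℝ) ≤ 2 * Sd := by linarith
    have hKpos : (0:ℝ) < 2 * Sd := by linarith
    have ha0 : (0:ℝ) ≤ 1 / (2 * Sd) := by positivity
    have hb0 : (0:ℝ) ≤ 1 - 1 / (2 * Sd) := by
      rw [sub_nonneg, div_le_one hKpos]; exact hK1
    have hab : 1 / (2 * Sd) + (1 - 1 / (2 * Sd)) = 1 := by ring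
    have hcc := hωconc.2
      (mem_Ici.mpr (by positivity : (0:ℝ) ≤ 2 * Sd * ℓ))
      (mem_Ici.mpr (le_rfl : (0:ℝ) ≤ 0)) ha0 hb0 hab
    simp only [smul_eq_mul, mul_zero, add_zero, hω0] at hcc
    have harg : 1 / (2 * Sd) * (2 * Sd * ℓ) = ℓ := by
      field_simp
    rw [harg] at hcc
    have h2 : 2 * ℓ * Sd = 2 * Sd * ℓ := by ring
    rw [h2]
    calc ω (2 * Sd * ℓ) = (2 * Sd) * (1 / (2 * Sd) * ω (2 * Sd * ℓ)) := by
          field_simp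
      _ ≤ (2 * Sd) * ω ℓ := mul_le_mul_of_nonneg_left hcc hKpos.le
  -- pointwise bound
  set T := C₂ + C₁ * (s:ℝ) + C₀ * (s:ℝ) ^ 2 with hT
  have hTnn : 0 ≤ T := by positivity
  set B := (d : ℝ) * (T * (2 * ℓ) ^ s / ℓ ^ 2) with hB
  have hBnn : 0 ≤ B := by positivity
  have hpt : ∀ y ∈ doubleCube a ℓ,
      ‖lap (fun z => φQ z * monoF c α z) y * (f y - f c)‖ ≤ B * (M * (2 * Sd * ω ℓ)) := by
    intro y hy
    rw [Real.norm_eq_abs, abs_mul]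
    have h1 := lap_mul_mono_bound φQ hφ C₀ C₁ C₂ ℓ hℓ hC0 hC1 hC2 c α y
      (fun j => doubleCube_coord_bound hy hc j)
    have h2 : |f y - f c| ≤ M * (2 * Sd * ω ℓ) := by
      calc |f y - f c| ≤ M * ω (dist y c) := hMω y c
        _ ≤ M * ω (2 * ℓ * Sd) := by
            refine mul_le_mul_of_nonneg_left ?_ hM
            exact hωm (mem_Ici.mpr dist_nonneg) (mem_Ici.mpr (by positivity))
              (doubleCube_dist_bound hℓ hy hc)
        _ ≤ M * (2 * Sd * ω ℓ) := mul_le_mul_of_nonneg_left hωK hM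
    exact mul_le_mul h1 h2 (abs_nonneg _) hBnn
  -- integral bound
  have hvol : volume (doubleCube a ℓ) = ENNReal.ofReal ((2 * ℓ) ^ d) :=
    volume_doubleCube a ℓ hℓ
  have hfin : volume (doubleCube a ℓ) < ⊤ := by
    rw [hvol]; exact ENNReal.ofReal_lt_top
  have hcont : Continuous (fun y => lap (fun z => φQ z * monoF c α z) y * (f y - f c)) :=
    (lap_mul_mono_continuous φQ hφ c α).mul (hf.continuous.sub continuous_const)
  have hIb : |I| ≤ B * (M * (2 * Sd * ω ℓ)) * (2 * ℓ) ^ d := by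
    have h := norm_setIntegral_le_of_norm_le_const (μ := volume) hfin hpt
    rw [Real.norm_eq_abs] at h
    rw [Measure.real, hvol, ENNReal.toReal_ofReal (by positivity)] at h
    exact h
  -- final arithmetic
  set n := d + s - 2 with hn
  have hpowsplit : (2 * ℓ) ^ s * (2 * ℓ) ^ d = (2 * ℓ) ^ n * (2 * ℓ) ^ 2 := by
    rw [← pow_add, ← pow_add]; congr 1; omega
  have key2 : B * (M * (2 * Sd * ω ℓ)) * (2 * ℓ) ^ d
      = (8 * (d:ℝ) * Sd * T) * (M * ω ℓ) * (2 * ℓ) ^ n := by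
    calc B * (M * (2 * Sd * ω ℓ)) * (2 * ℓ) ^ d
        = (d:ℝ) * T * (2 * Sd) * (M * ω ℓ) * ((2 * ℓ) ^ s * (2 * ℓ) ^ d) / ℓ ^ 2 := by
          rw [hB]; ring
      _ = (d:ℝ) * T * (2 * Sd) * (M * ω ℓ) * ((2 * ℓ) ^ n * (2 * ℓ) ^ 2) / ℓ ^ 2 := by
          rw [hpowsplit]
      _ = (8 * (d:ℝ) * Sd * T) * (M * ω ℓ) * (2 * ℓ) ^ n := by
          field_simp; ring
  have hTa : T ≤ (Sabs) * ((s:ℝ) + 1) ^ 2 := by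
    have l0 : C₀ ≤ |C₀| := le_abs_self _
    have l1 : C₁ ≤ |C₁| := le_abs_self _
    have l2 : C₂ ≤ |C₂| := le_abs_self _
    have hsnn : (0:ℝ) ≤ (s:ℝ) := Nat.cast_nonneg s
    rw [hT, hSabs]
    have hsq : (0:ℝ) ≤ (s:ℝ) ^ 2 := sq_nonneg _
    linarith [mul_le_mul_of_nonneg_right l0 hsq, mul_le_mul_of_nonneg_right l1 hsnn, l2,
      mul_nonneg (abs_nonneg C₀) hsnn, mul_nonneg (abs_nonneg C₁) hsnn,
      mul_nonneg (abs_nonneg C₂) hsnn, mul_nonneg (abs_nonneg C₁) hsq,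
      mul_nonneg (abs_nonneg C₂) hsq, abs_nonneg C₀, abs_nonneg C₁, abs_nonneg C₂, hsnn, hsq]
  have hgrow : ((s:ℝ) + 1) ^ 2 ≤ 16 * Sd ^ s :=
    le_trans (growth_bound s)
      (mul_le_mul_of_nonneg_left (pow_le_pow_left₀ (Real.sqrt_nonneg 3) hSd3 s) (by norm_num))
  have hSdn : Sd ^ s ≤ Sd ^ n := pow_le_pow_right₀ hSd1 (by omega)
  have key3 : G * (8 * (d:ℝ) * Sd * T) ≤ (128 * Sd * d * (G + 1) * Sabs) * Sd ^ n := by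
    calc G * (8 * (d:ℝ) * Sd * T) = 8 * (d:ℝ) * Sd * (G * T) := by ring
      _ ≤ 8 * (d:ℝ) * Sd * ((G + 1) * (Sabs * ((s:ℝ) + 1) ^ 2)) := by
          refine mul_le_mul_of_nonneg_left ?_ (by positivity)
          have h1 : G * T ≤ (G + 1) * T :=
            mul_le_mul_of_nonneg_right (by linarith [abs_nonneg (fundConst d)] : G ≤ G + 1) hTnn
          refine le_trans h1 (mul_le_mul_of_nonneg_left hTa (by positivity))
      _ ≤ 8 * (d:ℝ) * Sd * ((G + 1) * (Sabs * (16 * Sd ^ s))) := by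
          refine mul_le_mul_of_nonneg_left ?_ (by positivity)
          refine mul_le_mul_of_nonneg_left ?_ (by positivity)
          exact mul_le_mul_of_nonneg_left hgrow hSabs0.le
      _ = (128 * Sd * d * (G + 1) * Sabs) * Sd ^ s := by ring
      _ ≤ (128 * Sd * d * (G + 1) * Sabs) * Sd ^ n :=
          mul_le_mul_of_nonneg_left hSdn (by positivity)
  have hmulpow : (2 * ℓ * Sd) ^ n = (2 * ℓ) ^ n * Sd ^ n := mul_pow _ _ _
  rw [hmulpow]
  calc G * (1 / Fac) * |I| = (1 / Fac) * (G * |I|) := by ring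
    _ ≤ (1 / Fac) * ((128 * Sd * d * (G + 1) * Sabs) * (M * ω ℓ) * ((2 * ℓ) ^ n * Sd ^ n)) := by
        refine mul_le_mul_of_nonneg_left ?_ (by positivity)
        calc G * |I| ≤ G * (B * (M * (2 * Sd * ω ℓ)) * (2 * ℓ) ^ d) :=
              mul_le_mul_of_nonneg_left hIb (abs_nonneg _)
          _ = (G * (8 * (d:ℝ) * Sd * T)) * ((M * ω ℓ) * (2 * ℓ) ^ n) := by
              rw [key2]; ring
          _ ≤ ((128 * Sd * d * (G + 1) * Sabs) * Sd ^ n) * ((M * ω ℓ) * (2 * ℓ) ^ n) :=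
              mul_le_mul_of_nonneg_right key3 (by positivity)
          _ = (128 * Sd * d * (G + 1) * Sabs) * (M * ω ℓ) * ((2 * ℓ) ^ n * Sd ^ n) := by ring
    _ = (128 * Sd * d * (G + 1) * Sabs) * (1 / Fac) * M * ω ℓ * ((2 * ℓ) ^ n * Sd ^ n) := by ring
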